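/- Assume the minimal data collection condition, that |q^π(s,a)| ≤ V̄ for all (s,a), and let λ > 0. For i = 1,…,n define c̃_i := r_i + γ·q^π(s'_i,π) − q^π(s_i,a_i) and ĉ_i := r(s_i,a_i) + γ·(P^π q^π)(s_i,a_i) − q^π(s_i,a_i); let τ̃*_i := max(0, (G')⁻¹(c̃_i/λ)) and τ*_i := max(0, (G')⁻¹(ĉ_i/λ)); and set Γ̃_i := (τ̃*_i·c̃_i − λ·G(τ̃*_i))/(1−γ), Γ^pseudo_i := (τ*_i·ĉ_i − λ·G(τ*_i))/(1−γ), and Δ_i := Γ^pseudo_i − Γ̃_i. Then for each i, E[Δ_i | F_i] ≤ 0 almost surely; moreover ĉ_i = 0 and Γ^pseudo_i = 0 by the Bellman equation. (Lemma 4.1, supermartingale difference property.) -/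

import Mathlib

open MeasureTheory ProbabilityTheory

/-- `q(s,π) := ∫_A q(s,a) π(da|s)`. -/
noncomputable def actInt {S A : Type*} [MeasurableSpace S] [MeasurableSpace A]
    (π : Kernel S A) (q : S × A → ℝ) (s : S) : ℝ :=
  ∫ a, q (s, a) ∂(π s)

/-- `(P^π q)(s,a) := ∫_S q(s',π) P(ds'|s,a)`. -/
noncomputable def bellOp {S A : Type*} [MeasurableSpace S] [MeasurableSpace A]
    (P : Kernel (S × A) S) (π : Kernel S A) (q : S × A → ℝ) (sa : S × A) : ℝ :=
  ∫ s', actInt π q s' ∂(P sa)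

/-!
For every `c`, the value `τ c - λ G τ` at `τ = max 0 ((G')⁻¹ (c/λ))` maximises `x c - λ G x`
over `x ≥ 0`: by the tangent-line inequality of the convex `G`, this reduces to the first-order
condition `(x - τ) (c - λ G'(τ)) ≤ 0`. Comparing with `x = 1`, where `G 1 = 0`, gives
`Γ̃ᵢ ≥ c̃ᵢ / (1 - γ)`, while `Γ^pseudoᵢ = 0` because `ĉᵢ = 0` by the Bellman equation.
Conditionally on `ℱᵢ`, `q^π(s'ᵢ, π)` averages to `(P^π q^π)(sᵢ, aᵢ)`, so `E[c̃ᵢ | ℱᵢ] = ĉᵢ = 0`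
and therefore `E[Δᵢ | ℱᵢ] ≤ -E[c̃ᵢ | ℱᵢ] / (1 - γ) = 0`.
-/

open Set Function

section StrongConvexity

variable {G : ℝ → ℝ} {M : ℝ}

lemma monotone_deriv_sub_mul_of_convexOn_sub_sq (hG : Differentiable ℝ G)
    (hconv : ConvexOn ℝ univ (fun x => G x - M / 2 * x ^ 2)) :
    Monotone (fun x => deriv G x - M * x) := by
  have hderiv : ∀ x, deriv (fun x => G x - M / 2 * x ^ 2) x = deriv G x - M * x := fun x => by
    have h : HasDerivAt (fun x => G x - M / 2 * x ^ 2) (deriv G x - M / 2 * (2 * x ^ 1)) x :=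
      (hG x).hasDerivAt.sub ((hasDerivAt_pow 2 x).const_mul (M / 2))
    rw [h.deriv]
    ring
  intro a b hab
  simpa only [hderiv] using
    hconv.monotoneOn_deriv (fun x _ => (hG x).sub (by fun_prop)) (mem_univ a) (mem_univ b) hab

lemma strictMono_of_monotone_sub_mul {f : ℝ → ℝ} (hM : 0 < M)
    (hf : Monotone fun x => f x - M * x) : StrictMono f := fun a b hab => by
  have := hf hab.le
  dsimp only at this
  nlinarith

lemma surjective_deriv_of_monotone_sub_mul (hG : Differentiable ℝ G) (hM : 0 < M)
    (hmono : Monotone fun x => deriv G x - M * x) : Surjective (deriv G) := by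
  intro y
  set b := |y - deriv G 0| / M
  have hb : 0 ≤ b := by positivity
  have hMb : M * b = |y - deriv G 0| := mul_div_cancel₀ _ hM.ne'
  have hlow : deriv G (-b) ≤ y := by
    have := hmono (neg_nonpos.2 hb)
    simp only [mul_zero, mul_neg] at this
    linarith [neg_abs_le (y - deriv G 0)]
  have hup : y ≤ deriv G b := by
    have := hmono hb
    simp only [mul_zero] at this
    linarith [le_abs_self (y - deriv G 0)]
  obtain ⟨c, -, hc⟩ := exists_hasDerivWithinAt_eq_of_ge_of_le (neg_le_self hb)
    (fun x _ => (hG x).hasDerivAt.hasDerivWithinAt) hlow hup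
  exact ⟨c, hc⟩

end StrongConvexity

lemma ConvexOn.add_deriv_mul_sub_le {S : Set ℝ} {f : ℝ → ℝ} {x y : ℝ} (hf : ConvexOn ℝ S f)
    (hx : x ∈ S) (hy : y ∈ S) (hfx : DifferentiableAt ℝ f x) :
    f x + deriv f x * (y - x) ≤ f y := by
  rcases lt_trichotomy x y with hxy | rfl | hxy
  · have := hf.deriv_le_slope hx hy hxy hfx
    rw [slope_def_field, le_div_iff₀ (sub_pos.2 hxy)] at this
    linarith
  · simp
  · have := hf.slope_le_deriv hy hx hxy hfx
    rw [slope_def_field, div_le_iff₀ (sub_pos.2 hxy)] at this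
    linarith

/-- The paper's `τ* c - λ G τ*`; by `mul_sub_le_dualValue` it equals `sup_{x ≥ 0} (x c - λ G x)`. -/
noncomputable def dualValue (G : ℝ → ℝ) (lam c : ℝ) : ℝ :=
  max 0 (invFun (deriv G) (c / lam)) * c - lam * G (max 0 (invFun (deriv G) (c / lam)))

section DualValue

variable {G : ℝ → ℝ} {lam : ℝ}

lemma mul_sub_le_dualValue (hconv : ConvexOn ℝ univ G) (hG : Differentiable ℝ G)
    (hsurj : Surjective (deriv G)) (hlam : 0 < lam) (c : ℝ) {x : ℝ} (hx : 0 ≤ x) :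
    x * c - lam * G x ≤ dualValue G lam c := by
  set t := invFun (deriv G) (c / lam)
  set τ := max 0 t
  have htan := hconv.add_deriv_mul_sub_le (mem_univ τ) (mem_univ x) (hG τ)
  have hdt : deriv G t = c / lam := invFun_eq (hsurj _)
  have hfoc : (x - τ) * (c - lam * deriv G τ) ≤ 0 := by
    rcases le_or_gt 0 t with ht | ht
    · rw [show τ = t from max_eq_right ht, hdt, mul_div_cancel₀ _ hlam.ne', sub_self, mul_zero]
    · have hG0 : c / lam ≤ deriv G 0 :=
        hdt ▸ hconv.monotoneOn_deriv (fun x _ => hG x) (mem_univ t) (mem_univ 0) ht.le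
      rw [div_le_iff₀ hlam] at hG0
      rw [show τ = 0 from max_eq_left ht.le]
      nlinarith
  change x * c - lam * G x ≤ τ * c - lam * G τ
  nlinarith [mul_le_mul_of_nonneg_left htan hlam.le]

lemma le_dualValue (hconv : ConvexOn ℝ univ G) (hG : Differentiable ℝ G)
    (hsurj : Surjective (deriv G)) (hlam : 0 < lam) (hG_one : G 1 = 0) (c : ℝ) :
    c ≤ dualValue G lam c := by
  simpa [hG_one] using mul_sub_le_dualValue hconv hG hsurj hlam c zero_le_one

lemma dualValue_zero (hconv : ConvexOn ℝ univ G) (hG : Differentiable ℝ G)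
    (hsurj : Surjective (deriv G)) (hlam : 0 < lam)
    (hG_nonneg : ∀ x, 0 ≤ G x) (hG_one : G 1 = 0) : dualValue G lam 0 = 0 := by
  refine le_antisymm ?_ (le_dualValue hconv hG hsurj hlam hG_one 0)
  simp only [dualValue, mul_zero, zero_sub, neg_nonpos]
  exact mul_nonneg hlam.le (hG_nonneg _)

lemma monotone_dualValue (hconv : ConvexOn ℝ univ G) (hG : Differentiable ℝ G)
    (hsurj : Surjective (deriv G)) (hlam : 0 < lam) :
    Monotone (dualValue G lam) := fun c c' hcc' => by
  set τ := max 0 (invFun (deriv G) (c / lam))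
  calc dualValue G lam c = τ * c - lam * G τ := rfl
    _ ≤ τ * c' - lam * G τ := by gcongr
    _ ≤ dualValue G lam c' := mul_sub_le_dualValue hconv hG hsurj hlam c' (le_max_left _ _)

end DualValue

lemma Monotone.integrable_comp_of_abs_le {Ω : Type*} {mΩ : MeasurableSpace Ω} {μ : Measure Ω}
    [IsFiniteMeasure μ] {f : ℝ → ℝ} (hf : Monotone f) {X : Ω → ℝ} (hX : Measurable X) {C : ℝ}
    (hC : ∀ ω, |X ω| ≤ C) : Integrable (fun ω => f (X ω)) μ := by
  refine Integrable.of_bound (hf.measurable.comp hX).aestronglyMeasurable (max |f (-C)| |f C|)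
    (ae_of_all _ fun ω => ?_)
  obtain ⟨hlo, hhi⟩ := abs_le.1 (hC ω)
  exact abs_le_max_abs_abs (hf hlo) (hf hhi)

lemma condExp_neg_dualValue_div_nonpos {Ω : Type*} {m mΩ : MeasurableSpace Ω} {μ : Measure Ω}
    [IsFiniteMeasure μ] {G : ℝ → ℝ} {lam κ C : ℝ} (hconv : ConvexOn ℝ univ G)
    (hG : Differentiable ℝ G) (hsurj : Surjective (deriv G)) (hlam : 0 < lam) (hG_one : G 1 = 0)
    (hκ : 0 ≤ κ) {c : Ω → ℝ} (hc_meas : Measurable c) (hc_bdd : ∀ ω, |c ω| ≤ C)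
    (hc : μ[c|m] =ᵐ[μ] 0) :
    μ[fun ω => -(dualValue G lam (c ω) / κ)|m] ≤ᵐ[μ] 0 := by
  have hint : Integrable (fun ω => -(dualValue G lam (c ω) / κ)) μ :=
    (((monotone_dualValue hconv hG hsurj hlam).integrable_comp_of_abs_le hc_meas
      hc_bdd).div_const _).neg
  have hc_int : Integrable c μ :=
    Integrable.of_bound hc_meas.aestronglyMeasurable _ (ae_of_all _ hc_bdd)
  have hle : (fun ω => -(dualValue G lam (c ω) / κ)) ≤ᵐ[μ] (-κ⁻¹) • c :=
    ae_of_all _ fun ω => by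
      simp only [Pi.smul_apply, smul_eq_mul, neg_mul, ← div_eq_inv_mul, neg_le_neg_iff]
      exact div_le_div_of_nonneg_right (le_dualValue hconv hG hsurj hlam hG_one (c ω)) hκ
  filter_upwards [condExp_mono hint (hc_int.smul (-κ⁻¹)) hle, condExp_smul (-κ⁻¹) c m, hc]
    with ω hmono hsmul hzero
  rwa [hsmul, Pi.smul_apply, hzero, Pi.zero_apply, smul_zero] at hmono

section TDError

variable {S A : Type*} [MeasurableSpace S] [MeasurableSpace A] {π : Kernel S A}
  {q r : S × A → ℝ} {γ Br V : ℝ}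

lemma measurable_actInt [IsSFiniteKernel π] (hq : Measurable q) : Measurable (actInt π q) :=
  hq.stronglyMeasurable.integral_kernel_prod_right'.measurable

lemma abs_actInt_le [IsMarkovKernel π] (hq : ∀ x, |q x| ≤ V) (s : S) : |actInt π q s| ≤ V := by
  simpa [actInt] using norm_integral_le_of_norm_le_const (μ := π s) (f := fun a => q (s, a))
    (ae_of_all _ fun a => hq (s, a))

lemma abs_add_mul_actInt_sub_le [IsMarkovKernel π] (hr : ∀ x, |r x| ≤ Br) (hq : ∀ x, |q x| ≤ V)
    (x : S × A) (s : S) : |r x + γ * actInt π q s - q x| ≤ Br + |γ| * V + V :=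
  calc |r x + γ * actInt π q s - q x|
      ≤ |r x| + |γ| * |actInt π q s| + |q x| := by
        rw [← abs_mul]; exact (abs_sub _ _).trans (by gcongr; exact abs_add_le _ _)
    _ ≤ Br + |γ| * V + V := by gcongr; exacts [hr x, abs_actInt_le hq s, hq x]

variable {Ω : Type*} {m mΩ : MeasurableSpace Ω} {μ : Measure Ω} [IsProbabilityMeasure μ]
  {P : Kernel (S × A) S} {X : Ω → S × A} {Y : Ω → S}

lemma condExp_tdError_ae_eq_zero [IsMarkovKernel π] (hm : m ≤ mΩ) (hr : Measurable r)
    (hr_bdd : ∀ x, |r x| ≤ Br) (hq : Measurable q) (hq_bdd : ∀ x, |q x| ≤ V)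
    (hBellman : ∀ x, q x = r x + γ * bellOp P π q x) (hX : Measurable[m] X) (hY : Measurable Y)
    (hcond : μ[fun ω => actInt π q (Y ω)|m] =ᵐ[μ] fun ω => bellOp P π q (X ω)) :
    μ[fun ω => r (X ω) + γ * actInt π q (Y ω) - q (X ω)|m] =ᵐ[μ] 0 := by
  have hrq_meas : StronglyMeasurable[m] fun ω => r (X ω) - q (X ω) :=
    ((hr.comp hX).sub (hq.comp hX)).stronglyMeasurable
  have hrq_int : Integrable (fun ω => r (X ω) - q (X ω)) μ :=
    Integrable.of_bound (hrq_meas.mono hm).aestronglyMeasurable (Br + V) (ae_of_all _ fun ω =>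
      (abs_sub (r (X ω)) (q (X ω))).trans (add_le_add (hr_bdd _) (hq_bdd _)))
  have hY_int : Integrable (fun ω => actInt π q (Y ω)) μ :=
    Integrable.of_bound ((measurable_actInt hq).comp hY).aestronglyMeasurable V
      (ae_of_all _ fun ω => abs_actInt_le hq_bdd _)
  have hsplit : (fun ω => r (X ω) + γ * actInt π q (Y ω) - q (X ω))
      = (fun ω => r (X ω) - q (X ω)) + γ • fun ω => actInt π q (Y ω) := by
    ext ω; simp only [Pi.add_apply, Pi.smul_apply, smul_eq_mul]; ring
  rw [hsplit]
  filter_upwards [condExp_add hrq_int (hY_int.smul γ) m,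
    condExp_smul γ (fun ω => actInt π q (Y ω)) m, hcond] with ω hadd hsmul hω
  rw [hadd, Pi.add_apply, hsmul, condExp_of_stronglyMeasurable hm hrq_meas hrq_int,
    Pi.smul_apply, hω, smul_eq_mul, Pi.zero_apply]
  linarith [hBellman (X ω)]

end TDError

theorem stmt_12_general
    {S A Ω₀ : Type*} [MeasurableSpace S] [MeasurableSpace A] [mΩ : MeasurableSpace Ω₀]
    (Pr : Measure Ω₀) [IsProbabilityMeasure Pr]
    (γ : ℝ) (hγ1 : γ < 1)
    (r : S × A → ℝ) (hr_meas : Measurable r) (Br : ℝ) (hr_bdd : ∀ x, |r x| ≤ Br)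
    (P : Kernel (S × A) S)
    (π : Kernel S A) [IsMarkovKernel π]
    (V : ℝ)
    (qpi : S × A → ℝ) (hq_meas : Measurable qpi) (hq_bdd : ∀ x, |qpi x| ≤ V)
    (hBellman : ∀ x, qpi x = r x + γ * bellOp P π qpi x)
    (G : ℝ → ℝ) (M : ℝ) (hM : 0 < M)
    (hG_diff : Differentiable ℝ G)
    (hG_conv : ConvexOn ℝ Set.univ (fun x => G x - M / 2 * x ^ 2))
    (hG_nonneg : ∀ x, 0 ≤ G x) (hG_one : G 1 = 0)
    (lam : ℝ) (hlam : 0 < lam)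
    (n : ℕ)
    (sa : Fin n → Ω₀ → S × A) (rew : Fin n → Ω₀ → ℝ) (s' : Fin n → Ω₀ → S)
    (ℱ : Fin n → MeasurableSpace Ω₀) (hℱ : ∀ i, ℱ i ≤ mΩ)
    (hsa_meas : ∀ i, Measurable[ℱ i] (sa i))
    (hs'_meas : ∀ i, Measurable (s' i))
    -- minimal data collection condition:
    (hrew : ∀ i, ∀ᵐ ω ∂Pr, rew i ω = r (sa i ω))
    (hcond : ∀ i, ∀ f : S → ℝ, Measurable f → (∃ Bf, ∀ x, |f x| ≤ Bf) →
      (Pr[fun ω => f (s' i ω)|ℱ i]) =ᵐ[Pr] fun ω => ∫ x, f x ∂(P (sa i ω))) :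
    -- c̃ᵢ := rᵢ + γ q^π(s'ᵢ,π) − q^π(sᵢ,aᵢ)
    let ctil : Fin n → Ω₀ → ℝ := fun i ω =>
      rew i ω + γ * actInt π qpi (s' i ω) - qpi (sa i ω)
    -- ĉᵢ := r(sᵢ,aᵢ) + γ (P^π q^π)(sᵢ,aᵢ) − q^π(sᵢ,aᵢ)
    let chat : Fin n → Ω₀ → ℝ := fun i ω =>
      r (sa i ω) + γ * bellOp P π qpi (sa i ω) - qpi (sa i ω)
    -- τ̃*ᵢ := max(0, (G')⁻¹(c̃ᵢ/λ)) and τ*ᵢ := max(0, (G')⁻¹(ĉᵢ/λ))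
    let tautil : Fin n → Ω₀ → ℝ := fun i ω =>
      max 0 (Function.invFun (deriv G) (ctil i ω / lam))
    let taustar : Fin n → Ω₀ → ℝ := fun i ω =>
      max 0 (Function.invFun (deriv G) (chat i ω / lam))
    -- Γ̃ᵢ and Γ^pseudoᵢ
    let Gamtil : Fin n → Ω₀ → ℝ := fun i ω =>
      (tautil i ω * ctil i ω - lam * G (tautil i ω)) / (1 - γ)
    let Gamps : Fin n → Ω₀ → ℝ := fun i ω =>
      (taustar i ω * chat i ω - lam * G (taustar i ω)) / (1 - γ)
    (∀ i ω, chat i ω = 0)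
      ∧ (∀ i ω, Gamps i ω = 0)
      ∧ (∀ i : Fin n, ∀ᵐ ω ∂Pr,
          (Pr[fun ω' => Gamps i ω' - Gamtil i ω'|ℱ i]) ω ≤ 0) := by
  intro ctil chat tautil taustar Gamtil Gamps
  have hmono := monotone_deriv_sub_mul_of_convexOn_sub_sq hG_diff hG_conv
  have hsurj := surjective_deriv_of_monotone_sub_mul hG_diff hM hmono
  have hconv : ConvexOn ℝ univ G :=
    (strictMono_of_monotone_sub_mul hM hmono).monotone.convexOn_univ_of_deriv hG_diff
  have hchat : ∀ i ω, chat i ω = 0 := fun i ω => by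
    simp only [chat]
    linarith [hBellman (sa i ω)]
  have hGamps : ∀ i ω, Gamps i ω = 0 := fun i ω => by
    change dualValue G lam (chat i ω) / (1 - γ) = 0
    rw [hchat, dualValue_zero hconv hG_diff hsurj hlam hG_nonneg hG_one, zero_div]
  refine ⟨hchat, hGamps, fun i => ?_⟩
  set c : Ω₀ → ℝ := fun ω => r (sa i ω) + γ * actInt π qpi (s' i ω) - qpi (sa i ω)
  have hsa : Measurable (sa i) := (hsa_meas i).mono (hℱ i) le_rfl
  have hc_meas : Measurable c :=
    ((hr_meas.comp hsa).add (((measurable_actInt hq_meas).comp (hs'_meas i)).const_mul γ)).sub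
      (hq_meas.comp hsa)
  have hc_bdd : ∀ ω, |c ω| ≤ Br + |γ| * V + V := fun ω =>
    abs_add_mul_actInt_sub_le hr_bdd hq_bdd _ _
  have hc_cond : Pr[c|ℱ i] =ᵐ[Pr] 0 :=
    condExp_tdError_ae_eq_zero (hℱ i) hr_meas hr_bdd hq_meas hq_bdd hBellman (hsa_meas i)
      (hs'_meas i) (hcond i _ (measurable_actInt hq_meas) ⟨V, abs_actInt_le hq_bdd⟩)
  have hΔ : (fun ω => Gamps i ω - Gamtil i ω) =ᵐ[Pr]
      fun ω => -(dualValue G lam (c ω) / (1 - γ)) := by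
    filter_upwards [hrew i] with ω hω
    change Gamps i ω - dualValue G lam (ctil i ω) / (1 - γ) = _
    rw [hGamps, zero_sub]
    simp only [ctil, c, hω]
  filter_upwards [condExp_congr_ae (m := ℱ i) hΔ, condExp_neg_dualValue_div_nonpos hconv hG_diff
    hsurj hlam hG_one (sub_pos.2 hγ1).le hc_meas hc_bdd hc_cond] with ω hΔω hle
  exact hΔω ▸ hle

/-- Lemma 4.1, supermartingale difference property. -/
theorem stmt_12
    {S A Ω₀ : Type*} [MeasurableSpace S] [MeasurableSpace A] [mΩ : MeasurableSpace Ω₀]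
    (Pr : Measure Ω₀) [IsProbabilityMeasure Pr]
    (γ : ℝ) (hγ0 : 0 ≤ γ) (hγ1 : γ < 1)
    (r : S × A → ℝ) (hr_meas : Measurable r) (Br : ℝ) (hr_bdd : ∀ x, |r x| ≤ Br)
    (P : Kernel (S × A) S) [IsMarkovKernel P]
    (π : Kernel S A) [IsMarkovKernel π]
    (V : ℝ) (hV : 0 < V)
    (qpi : S × A → ℝ) (hq_meas : Measurable qpi) (hq_bdd : ∀ x, |qpi x| ≤ V)
    (hBellman : ∀ x, qpi x = r x + γ * bellOp P π qpi x)
    (G : ℝ → ℝ) (M : ℝ) (hM : 0 < M)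
    (hG_diff : Differentiable ℝ G)
    (hG_conv : ConvexOn ℝ Set.univ (fun x => G x - M / 2 * x ^ 2))
    (hG_nonneg : ∀ x, 0 ≤ G x) (hG_one : G 1 = 0)
    (lam : ℝ) (hlam : 0 < lam)
    (n : ℕ)
    (sa : Fin n → Ω₀ → S × A) (rew : Fin n → Ω₀ → ℝ) (s' : Fin n → Ω₀ → S)
    (ℱ : Fin n → MeasurableSpace Ω₀) (hℱ : ∀ i, ℱ i ≤ mΩ)
    (hsa_meas : ∀ i, Measurable[ℱ i] (sa i))
    (hrew_meas : ∀ i, Measurable (rew i)) (hs'_meas : ∀ i, Measurable (s' i))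
    -- minimal data collection condition:
    (hrew : ∀ i, ∀ᵐ ω ∂Pr, rew i ω = r (sa i ω))
    (hcond : ∀ i, ∀ f : S → ℝ, Measurable f → (∃ Bf, ∀ x, |f x| ≤ Bf) →
      (Pr[fun ω => f (s' i ω)|ℱ i]) =ᵐ[Pr] fun ω => ∫ x, f x ∂(P (sa i ω))) :
    -- c̃ᵢ := rᵢ + γ q^π(s'ᵢ,π) − q^π(sᵢ,aᵢ)
    let ctil : Fin n → Ω₀ → ℝ := fun i ω =>
      rew i ω + γ * actInt π qpi (s' i ω) - qpi (sa i ω)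
    -- ĉᵢ := r(sᵢ,aᵢ) + γ (P^π q^π)(sᵢ,aᵢ) − q^π(sᵢ,aᵢ)
    let chat : Fin n → Ω₀ → ℝ := fun i ω =>
      r (sa i ω) + γ * bellOp P π qpi (sa i ω) - qpi (sa i ω)
    -- τ̃*ᵢ := max(0, (G')⁻¹(c̃ᵢ/λ)) and τ*ᵢ := max(0, (G')⁻¹(ĉᵢ/λ))
    let tautil : Fin n → Ω₀ → ℝ := fun i ω =>
      max 0 (Function.invFun (deriv G) (ctil i ω / lam))
    let taustar : Fin n → Ω₀ → ℝ := fun i ω =>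
      max 0 (Function.invFun (deriv G) (chat i ω / lam))
    -- Γ̃ᵢ and Γ^pseudoᵢ
    let Gamtil : Fin n → Ω₀ → ℝ := fun i ω =>
      (tautil i ω * ctil i ω - lam * G (tautil i ω)) / (1 - γ)
    let Gamps : Fin n → Ω₀ → ℝ := fun i ω =>
      (taustar i ω * chat i ω - lam * G (taustar i ω)) / (1 - γ)
    (∀ i ω, chat i ω = 0)
      ∧ (∀ i ω, Gamps i ω = 0)
      ∧ (∀ i : Fin n, ∀ᵐ ω ∂Pr,
          (Pr[fun ω' => Gamps i ω' - Gamtil i ω'|ℱ i]) ω ≤ 0) :=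
  stmt_12_general (mΩ := mΩ) Pr γ hγ1 r hr_meas Br hr_bdd P π V qpi hq_meas hq_bdd hBellman G M hM
    hG_diff hG_conv hG_nonneg hG_one lam hlam n sa rew s' ℱ hℱ hsa_meas hs'_meas hrew hcond
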